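/- Let $G_0$ be a finite abelian group of order $e$, and let $A \subseteq \mathbb{Z} \times G_0$ be a finite set whose projection to $\mathbb{Z}$ has all consecutive gaps bounded by $b$. Let $\pi : \mathbb{Z} \times G_0 \to \mathbb{Z}$ be the projection, $B_0 = \{\min \pi(A), \max \pi(A)\}$, and $A_0 = A \cap \pi^{-1}(B_0)$. Then $|A_0| \le 2e$, and for every $n > 2b^2 e$ the $n$-fold sumset satisfies $nA = (n - 2b^2 e) A_0 + 2b^2 e\, A$. -/

import Mathlib

/-!
Let `m` and `M` be the least and largest first coordinates of `A`. A sum of `k + 1` elements of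
`A`, `k = 2 b² e`, can be rewritten as another such sum until one summand lies on the boundary
`A₀`; this gives `(k + 1) • A ⊆ A₀ + k • A`, from which the identity follows by induction.

To rewrite a sum none of whose summands lies on the boundary, give each summand `c` a neighbour
of `A` below it and one above it, at distance between `1` and `b`. Among the `e b` lowest
summands and `e b²` higher ones, split into `e` blocks, a pigeonhole argument on prefix sums finds
in every block a nonempty set of low summands and a set of high summands whose downward and
upward displacements have the same total. Prefix sums in `G₀`, of order `e`, then single out a run
of blocks whose displacements also cancel in `G₀`. Moving the chosen summands to their neighbours
keeps the sum but spreads the summands apart, so the nonnegative potential `∑ (x - m) (M - x)`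
of their first coordinates strictly decreases.
-/

open Pointwise

/-- The `n`-fold sumset of `A`. -/
def foldSum {G : Type*} [AddCommMonoid G] (n : ℕ) (A : Set G) : Set G :=
  {t | ∃ s : Fin n → G, (∀ i, s i ∈ A) ∧ ∑ i, s i = t}

theorem foldSum_eq_nsmul {G : Type*} [AddCommMonoid G] (n : ℕ) (A : Set G) :
    foldSum n A = n • A := by
  ext t
  simp only [foldSum, Set.mem_nsmul, List.sum_ofFn]
  constructor
  · rintro ⟨s, hs, rfl⟩
    exact ⟨fun i => ⟨s i, hs i⟩, rfl⟩
  · rintro ⟨s, rfl⟩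
    exact ⟨fun i => s i, fun i => (s i).2, rfl⟩

theorem Set.nsmul_add_eq_of_succ_nsmul_subset {α : Type*} [AddCommMonoid α] {S₀ S : Set α}
    (h₀ : S₀ ⊆ S) {k : ℕ} (h : (k + 1) • S ⊆ S₀ + k • S) (j : ℕ) :
    (j + k) • S = j • S₀ + k • S := by
  refine Set.Subset.antisymm ?_ ?_
  · induction j with
    | zero => simp
    | succ j ih =>
      calc (j + 1 + k) • S = (k + 1) • S + j • S := by rw [← add_nsmul]; ring_nf
        _ ⊆ S₀ + k • S + j • S := Set.add_subset_add_right h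
        _ = S₀ + (j + k) • S := by rw [add_assoc, ← add_nsmul, add_comm k]
        _ ⊆ S₀ + (j • S₀ + k • S) := Set.add_subset_add_left ih
        _ = (j + 1) • S₀ + k • S := by rw [← add_assoc, succ_nsmul']
  · rw [add_nsmul]
    exact Set.add_subset_add_right (Set.nsmul_subset_nsmul_left h₀)

theorem exists_nonempty_sum_eq_zero {G : Type*} [AddCommGroup G] [Fintype G] {n : ℕ}
    (hn : Fintype.card G ≤ n) (γ : Fin n → G) :
    ∃ R : Finset (Fin n), R.Nonempty ∧ ∑ j ∈ R, γ j = 0 := by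
  classical
  let prefixSet : Fin (n + 1) → Finset (Fin n) := fun k => {j | (j : ℕ) < k}
  obtain ⟨k, k', hne, heq⟩ := Fintype.exists_ne_map_eq_of_card_lt
    (fun k => ∑ j ∈ prefixSet k, γ j) (by simpa [Nat.lt_succ_iff] using hn)
  wlog hlt : k < k' generalizing k k'
  · exact this k' k hne.symm heq.symm (lt_of_le_of_ne (not_lt.1 hlt) hne.symm)
  have hsub : prefixSet k ⊆ prefixSet k' := fun j hj => by
    simp only [prefixSet, Finset.mem_filter_univ] at hj ⊢
    omega
  refine ⟨prefixSet k' \ prefixSet k, ⟨⟨k, by omega⟩, by simp [prefixSet, hlt]⟩, ?_⟩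
  rw [Finset.sum_sdiff_eq_sub hsub, ← heq, sub_self]

theorem exists_range_sum_sub_mem_Ico {n b : ℕ} (u : ℕ → ℤ) (hb : 0 < b)
    (hu : ∀ t < n, 0 < u t ∧ u t ≤ b) {y : ℤ} (hy : 0 ≤ y)
    (hyn : y ≤ ∑ t ∈ Finset.range n, u t) :
    ∃ j ≤ n, ∑ t ∈ Finset.range j, u t - y ∈ Finset.Ico (0 : ℤ) b := by
  induction n with
  | zero => exact ⟨0, le_rfl, by simp only [Finset.sum_range_zero, Finset.mem_Ico] at hyn ⊢; omega⟩
  | succ n ih =>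
    by_cases hyn' : y ≤ ∑ t ∈ Finset.range n, u t
    · obtain ⟨j, hj, hmem⟩ := ih (fun t ht => hu t (by omega)) hyn'
      exact ⟨j, by omega, hmem⟩
    · rw [Finset.sum_range_succ] at hyn
      refine ⟨n + 1, le_rfl, ?_⟩
      rw [Finset.sum_range_succ, Finset.mem_Ico]
      have := hu n n.lt_succ_self
      omega

theorem exists_Ico_sum_eq_Ico_sum {m n b : ℕ} (d u : ℕ → ℤ) (hb : 0 < b) (hbm : b ≤ m)
    (hd : ∀ t < m, 0 < d t) (hu : ∀ t < n, 0 < u t ∧ u t ≤ b)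
    (hsum : ∑ t ∈ Finset.range m, d t ≤ ∑ t ∈ Finset.range n, u t) :
    ∃ i₁ i₂ j₁ j₂ : ℕ, i₁ < i₂ ∧ i₂ ≤ m ∧ j₂ ≤ n ∧
      ∑ t ∈ Finset.Ico i₁ i₂, d t = ∑ t ∈ Finset.Ico j₁ j₂, u t := by
  let D : ℕ → ℤ := fun i => ∑ t ∈ Finset.range i, d t
  let U : ℕ → ℤ := fun j => ∑ t ∈ Finset.range j, u t
  have hDle : ∀ i i', i ≤ i' → i' ≤ m → D i ≤ D i' := fun i i' hle hi' =>
    Finset.sum_le_sum_of_subset_of_nonneg (Finset.range_subset_range.2 hle)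
      fun t ht _ => (hd t ((Finset.mem_range.1 ht).trans_le hi')).le
  have hDlt : ∀ i i', i < i' → i' ≤ m → D i < D i' := fun i i' hlt hi' =>
    Finset.sum_lt_sum_of_subset (Finset.range_subset_range.2 hlt.le)
      (Finset.mem_range.2 hlt) Finset.notMem_range_self (hd i (by omega))
      fun t ht _ => (hd t ((Finset.mem_range.1 ht).trans_le hi')).le
  have hUle : ∀ j j', j ≤ j' → j' ≤ n → U j ≤ U j' := fun j j' hle hj' =>
    Finset.sum_le_sum_of_subset_of_nonneg (Finset.range_subset_range.2 hle)
      fun t ht _ => (hu t ((Finset.mem_range.1 ht).trans_le hj')).1.le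
  have hcatch : ∀ i ∈ Finset.range (m + 1), ∃ j ≤ n, U j - D i ∈ Finset.Ico (0 : ℤ) b := by
    intro i hi
    have hi : i ≤ m := Nat.lt_succ_iff.1 (Finset.mem_range.1 hi)
    exact exists_range_sum_sub_mem_Ico u hb hu (by simpa [D] using hDle 0 i (Nat.zero_le i) hi)
      ((hDle i m hi le_rfl).trans hsum)
  -- The overshoots `U (g i) - D i` of the `m + 1 > b` prefix sums `D i` take at most `b` values.
  choose! g hgn hg using hcatch
  obtain ⟨i, hi, i', hi', hne, heq⟩ := Finset.exists_ne_map_eq_of_card_lt_of_maps_to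
    (by simp only [Int.card_Ico, sub_zero, Int.toNat_natCast, Finset.card_range]; omega) hg
  wlog hlt : i < i' generalizing i i'
  · exact this i' hi' i hi hne.symm heq.symm (lt_of_le_of_ne (not_lt.1 hlt) hne.symm)
  simp only [Finset.mem_range] at hi hi'
  have hgg : g i ≤ g i' := by
    by_contra! h
    have := hUle (g i') (g i) h.le (hgn i (by simpa using hi))
    have := hDlt i i' hlt (by omega)
    omega
  refine ⟨i, i', g i, g i', hlt, by omega, hgn i' (by simpa using hi'), ?_⟩
  rw [Finset.sum_Ico_eq_sub _ hlt.le, Finset.sum_Ico_eq_sub _ hgg]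
  change D i' - D i = U (g i') - U (g i)
  omega

theorem Fin.sum_filter_val_mem {M : Type*} [AddCommMonoid M] {m : ℕ} (d : Fin m → M)
    (s : Finset ℕ) (hs : ∀ t ∈ s, t < m) :
    ∑ i ∈ Finset.univ.filter (fun i : Fin m => (i : ℕ) ∈ s), d i =
      ∑ t ∈ s, if h : t < m then d ⟨t, h⟩ else 0 := by
  have hmap : (Finset.univ.filter (fun i : Fin m => (i : ℕ) ∈ s)).map Fin.valEmbedding = s := by
    ext t
    simp only [Finset.mem_map, Finset.mem_filter_univ, Fin.valEmbedding_apply]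
    exact ⟨fun ⟨i, hi, hit⟩ => hit ▸ hi,
      fun ht => ⟨⟨t, hs t ht⟩, ht, rfl⟩⟩
  conv_rhs => rw [← hmap]
  rw [Finset.sum_map]
  exact Finset.sum_congr rfl fun i _ => by simp

theorem Fin.exists_subset_sum_eq_subset_sum {m n b : ℕ} (d : Fin m → ℤ) (u : Fin n → ℤ)
    (hb : 0 < b) (hbm : b ≤ m) (hd : ∀ i, 0 < d i) (hu : ∀ j, 0 < u j ∧ u j ≤ b)
    (hsum : ∑ i, d i ≤ ∑ j, u j) :
    ∃ S : Finset (Fin m), ∃ T : Finset (Fin n), S.Nonempty ∧ ∑ i ∈ S, d i = ∑ j ∈ T, u j := by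
  obtain ⟨i₁, i₂, j₁, j₂, hi, hi₂, hj₂, heq⟩ := exists_Ico_sum_eq_Ico_sum (n := n)
    (fun t => if h : t < m then d ⟨t, h⟩ else 0) (fun t => if h : t < n then u ⟨t, h⟩ else 0)
    hb hbm (fun t ht => by simp [ht, hd]) (fun t ht => by simp [ht, hu])
    (by simpa [Finset.sum_fin_eq_sum_range] using hsum)
  refine ⟨Finset.univ.filter (fun i : Fin m => (i : ℕ) ∈ Finset.Ico i₁ i₂),
    Finset.univ.filter (fun j : Fin n => (j : ℕ) ∈ Finset.Ico j₁ j₂),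
    ⟨⟨i₁, by omega⟩, by simp [hi]⟩, ?_⟩
  rw [Fin.sum_filter_val_mem _ _ fun t ht => (Finset.mem_Ico.1 ht).2.trans_le hi₂,
    Fin.sum_filter_val_mem _ _ fun t ht => (Finset.mem_Ico.1 ht).2.trans_le hj₂]
  exact heq

theorem exists_subset_fst_sum_add_fst_sum_eq_zero {G : Type*} [AddCommGroup G] {b : ℕ}
    (hb : 0 < b) (v : Fin b → ℤ × G) (w : Fin (b * b) → ℤ × G)
    (hv : ∀ i, -(b : ℤ) ≤ (v i).1 ∧ (v i).1 < 0) (hw : ∀ j, 0 < (w j).1 ∧ (w j).1 ≤ b) :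
    ∃ S : Finset (Fin b), ∃ T : Finset (Fin (b * b)), S.Nonempty ∧
      ∑ i ∈ S, (v i).1 + ∑ j ∈ T, (w j).1 = 0 := by
  have hsum : ∑ i, -(v i).1 ≤ ∑ j, (w j).1 :=
    calc ∑ i, -(v i).1 ≤ ∑ _i : Fin b, (b : ℤ) := Finset.sum_le_sum fun i _ => by linarith [hv i]
      _ ≤ ∑ _j : Fin (b * b), (1 : ℤ) := by simp
      _ ≤ ∑ j, (w j).1 := Finset.sum_le_sum fun j _ => (hw j).1
  obtain ⟨S, T, hS, hST⟩ := Fin.exists_subset_sum_eq_subset_sum _ _ hb le_rfl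
    (fun i => by linarith [hv i]) hw hsum
  refine ⟨S, T, hS, ?_⟩
  rw [Finset.sum_neg_distrib] at hST
  linarith

theorem Fin.exists_embedding_le_embedding {α : Type*} [LinearOrder α] {m n N : ℕ}
    (h : m + n ≤ N) (x : Fin N → α) :
    ∃ (φ : Fin m ↪ Fin N) (ψ : Fin n ↪ Fin N),
      (∀ i j, φ i ≠ ψ j) ∧ ∀ i j, x (φ i) ≤ x (ψ j) := by
  let σ := Tuple.sort x
  refine ⟨⟨fun i => σ (Fin.castLE h (Fin.castAdd n i)), fun i j hij => by simpa using hij⟩,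
    ⟨fun j => σ (Fin.castLE h (Fin.natAdd m j)), fun i j hij => by simpa using hij⟩,
    fun i j hij => ?_, fun i j => Tuple.monotone_sort x ?_⟩
  · have := congrArg Fin.val (σ.injective hij)
    simp only [Fin.val_castLE, Fin.val_castAdd, Fin.val_natAdd] at this
    omega
  · simp only [Fin.le_def, Fin.val_castLE, Fin.val_castAdd, Fin.val_natAdd]
    omega

theorem exists_exchange {G : Type*} [AddCommGroup G] [Fintype G] {N b : ℕ} (hb : 0 < b)
    (hN : Fintype.card G * b + Fintype.card G * (b * b) ≤ N) (x : Fin N → ℤ)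
    (v w : Fin N → ℤ × G) (hv : ∀ i, -(b : ℤ) ≤ (v i).1 ∧ (v i).1 < 0)
    (hw : ∀ j, 0 < (w j).1 ∧ (w j).1 ≤ b) :
    ∃ I J : Finset (Fin N), Disjoint I J ∧ I.Nonempty ∧ (∀ i ∈ I, ∀ j ∈ J, x i ≤ x j) ∧
      ∑ i ∈ I, v i + ∑ j ∈ J, w j = 0 := by
  classical
  obtain ⟨φ₀, ψ₀, hφψ, hx⟩ := Fin.exists_embedding_le_embedding hN x
  let φ : Fin (Fintype.card G) × Fin b ↪ Fin N := finProdFinEquiv.toEmbedding.trans φ₀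
  let ψ : Fin (Fintype.card G) × Fin (b * b) ↪ Fin N := finProdFinEquiv.toEmbedding.trans ψ₀
  choose S T hS hST using fun j => exists_subset_fst_sum_add_fst_sum_eq_zero hb
    (fun t => v (φ (j, t))) (fun t => w (ψ (j, t))) (fun _ => hv _) (fun _ => hw _)
  obtain ⟨R, ⟨j, hj⟩, hRsum⟩ := exists_nonempty_sum_eq_zero le_rfl
    fun j => (∑ t ∈ S j, v (φ (j, t)) + ∑ t ∈ T j, w (ψ (j, t))).2
  let I := ((R ×ˢ Finset.univ).filter fun p => p.2 ∈ S p.1).map φ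
  let J := ((R ×ˢ Finset.univ).filter fun p => p.2 ∈ T p.1).map ψ
  have hI : ∑ i ∈ I, v i = ∑ j ∈ R, ∑ t ∈ S j, v (φ (j, t)) := by
    rw [Finset.sum_map]
    exact Finset.sum_finset_product _ _ _ fun p => by simp
  have hJ : ∑ i ∈ J, w i = ∑ j ∈ R, ∑ t ∈ T j, w (ψ (j, t)) := by
    rw [Finset.sum_map]
    exact Finset.sum_finset_product _ _ _ fun p => by simp
  refine ⟨I, J, ?_, ?_, ?_, ?_⟩
  · simp only [I, J, Finset.disjoint_left, Finset.mem_map]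
    rintro _ ⟨p, -, rfl⟩ ⟨q, -, hq⟩
    exact hφψ _ _ hq.symm
  · obtain ⟨t, ht⟩ := hS j
    exact ⟨φ (j, t), Finset.mem_map_of_mem _ (by simp [hj, ht])⟩
  · simp only [I, J, Finset.mem_map]
    rintro _ ⟨p, -, rfl⟩ _ ⟨q, -, rfl⟩
    exact hx _ _
  · rw [hI, hJ, ← Finset.sum_add_distrib]
    refine Prod.ext ?_ (by rw [Prod.snd_sum, Prod.snd_zero]; exact hRsum)
    simp only [Prod.fst_sum, Prod.fst_add, hST, Finset.sum_const_zero, Prod.fst_zero]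

theorem Finset.sum_sq_lt_sum_add_sq {ι : Type*} (s : Finset ι) (x δ : ι → ℤ) (X : ℤ)
    (hδ : ∑ i ∈ s, δ i = 0) (haway : ∀ i ∈ s, 0 ≤ (x i - X) * δ i)
    (hne : ∃ i ∈ s, δ i ≠ 0) :
    ∑ i ∈ s, x i ^ 2 < ∑ i ∈ s, (x i + δ i) ^ 2 := by
  obtain ⟨i₀, hi₀, hδi₀⟩ := hne
  have hexpand : ∑ i ∈ s, (x i + δ i) ^ 2 = ∑ i ∈ s, x i ^ 2 +
      (2 * ∑ i ∈ s, (x i - X) * δ i + ∑ i ∈ s, δ i ^ 2) + 2 * X * ∑ i ∈ s, δ i := by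
    simp only [Finset.mul_sum, ← Finset.sum_add_distrib]
    exact Finset.sum_congr rfl fun i _ => by ring
  have hpos : 0 < ∑ i ∈ s, δ i ^ 2 :=
    Finset.sum_pos' (fun i _ => sq_nonneg _) ⟨i₀, hi₀, by positivity⟩
  have := Finset.sum_nonneg haway
  rw [hexpand, hδ]
  linarith

theorem Finset.sum_sub_mul_sub_lt {ι : Type*} (s : Finset ι) (x y : ι → ℤ) (m M : ℤ)
    (hsum : ∑ i ∈ s, y i = ∑ i ∈ s, x i) (hsq : ∑ i ∈ s, x i ^ 2 < ∑ i ∈ s, y i ^ 2) :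
    ∑ i ∈ s, (y i - m) * (M - y i) < ∑ i ∈ s, (x i - m) * (M - x i) := by
  have hexpand : ∀ z : ι → ℤ, ∑ i ∈ s, (z i - m) * (M - z i) =
      (m + M) * ∑ i ∈ s, z i - ∑ i ∈ s, z i ^ 2 - ∑ _i ∈ s, m * M := by
    intro z
    simp only [Finset.mul_sum, ← Finset.sum_sub_distrib]
    exact Finset.sum_congr rfl fun i _ => by ring
  rw [hexpand, hexpand, hsum]
  linarith

theorem exists_move_sum_eq_sum_sq_lt {ι G : Type*} [Fintype ι] [DecidableEq ι]
    [AddCommGroup G] (c α β : ι → ℤ × G) {I J : Finset ι} (hIJ : Disjoint I J)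
    (hI : I.Nonempty) (hα : ∀ i ∈ I, (α i).1 < (c i).1) (hβ : ∀ j ∈ J, (c j).1 ≤ (β j).1)
    (hx : ∀ i ∈ I, ∀ j ∈ J, (c i).1 ≤ (c j).1)
    (hsum : ∑ i ∈ I, (α i - c i) + ∑ j ∈ J, (β j - c j) = 0) :
    ∃ c' : ι → ℤ × G, (∀ i, c' i = α i ∨ c' i = β i ∨ c' i = c i) ∧ ∑ i, c' i = ∑ i, c i ∧
      ∑ i, (c i).1 ^ 2 < ∑ i, (c' i).1 ^ 2 := by
  let Δ : ι → ℤ × G := fun i =>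
    (if i ∈ I then α i - c i else 0) + (if i ∈ J then β i - c i else 0)
  have hΔ : ∑ i, Δ i = 0 := by
    simp only [Δ, Finset.sum_add_distrib, Finset.sum_ite_mem, Finset.univ_inter, hsum]
  have hΔI : ∀ i ∈ I, Δ i = α i - c i := fun i hi => by
    simp [Δ, hi, Finset.disjoint_left.1 hIJ hi]
  refine ⟨c + Δ, fun i => ?_, by simp [Finset.sum_add_distrib, hΔ], ?_⟩
  · by_cases hiI : i ∈ I
    · simp [hΔI i hiI]
    · by_cases hiJ : i ∈ J <;> simp [Δ, hiI, hiJ]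
  obtain ⟨i₁, hi₁, hmax⟩ := Finset.exists_max_image I (fun i => (c i).1) hI
  obtain ⟨i₀, hi₀⟩ := hI
  refine Finset.sum_sq_lt_sum_add_sq _ _ (fun i => (Δ i).1) (c i₁).1
    (by rw [← Prod.fst_sum, hΔ, Prod.fst_zero]) (fun i _ => ?_)
    ⟨i₀, Finset.mem_univ _, by simpa [hΔI i₀ hi₀, sub_eq_zero] using (hα i₀ hi₀).ne⟩
  by_cases hiI : i ∈ I
  · rw [hΔI i hiI, Prod.fst_sub]
    exact mul_nonneg_of_nonpos_of_nonpos (by linarith [hmax i hiI]) (by linarith [hα i hiI])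
  · by_cases hiJ : i ∈ J
    · simp only [Δ, hiI, hiJ, if_true, if_false, zero_add, Prod.fst_sub]
      exact mul_nonneg (by linarith [hx i₁ hi₁ i hiJ]) (by linarith [hβ i hiJ])
    · simp [Δ, hiI, hiJ]

section Boundary

variable {G : Type*} [AddCommGroup G] [Fintype G] {A : Set (ℤ × G)} {m M : ℤ} {b : ℕ}

theorem exists_sum_eq_sum_sq_lt
    (hdown : ∀ a ∈ A, a.1 ≠ m → ∃ a' ∈ A, a'.1 < a.1 ∧ a.1 ≤ a'.1 + b)
    (hup : ∀ a ∈ A, a.1 ≠ M → ∃ a' ∈ A, a.1 < a'.1 ∧ a'.1 ≤ a.1 + b)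
    {N : ℕ} (hN : Fintype.card G * b + Fintype.card G * (b * b) < N)
    (c : Fin N → ℤ × G) (hc : ∀ i, c i ∈ A) (hint : ∀ i, (c i).1 ≠ m ∧ (c i).1 ≠ M) :
    ∃ c' : Fin N → ℤ × G, (∀ i, c' i ∈ A) ∧ ∑ i, c' i = ∑ i, c i ∧
      ∑ i, (c i).1 ^ 2 < ∑ i, (c' i).1 ^ 2 := by
  choose α hαA hα using fun i => hdown (c i) (hc i) (hint i).1
  choose β hβA hβ using fun i => hup (c i) (hc i) (hint i).2
  have hb : 0 < b := by have := hα ⟨0, by omega⟩; omega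
  obtain ⟨I, J, hIJ, hI, hx, hsum⟩ := exists_exchange hb hN.le (fun i => (c i).1)
    (fun i => α i - c i) (fun i => β i - c i)
    (fun i => by have := hα i; simp only [Prod.fst_sub]; omega)
    (fun i => by have := hβ i; simp only [Prod.fst_sub]; omega)
  obtain ⟨c', hc', hsum', hsq⟩ := exists_move_sum_eq_sum_sq_lt c α β hIJ hI
    (fun i _ => (hα i).1) (fun j _ => (hβ j).1.le) hx hsum
  refine ⟨c', fun i => ?_, hsum', hsq⟩
  rcases hc' i with h | h | h <;> rw [h]
  exacts [hαA i, hβA i, hc i]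

theorem exists_sum_eq_of_mem_boundary
    (hbound : ∀ a ∈ A, m ≤ a.1 ∧ a.1 ≤ M)
    (hdown : ∀ a ∈ A, a.1 ≠ m → ∃ a' ∈ A, a'.1 < a.1 ∧ a.1 ≤ a'.1 + b)
    (hup : ∀ a ∈ A, a.1 ≠ M → ∃ a' ∈ A, a.1 < a'.1 ∧ a'.1 ≤ a.1 + b)
    {N : ℕ} (hN : Fintype.card G * b + Fintype.card G * (b * b) < N)
    (c : Fin N → ℤ × G) (hc : ∀ i, c i ∈ A) :
    ∃ c' : Fin N → ℤ × G, (∀ i, c' i ∈ A) ∧ ∑ i, c' i = ∑ i, c i ∧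
      ∃ i, c' i ∈ {a ∈ A | a.1 = m ∨ a.1 = M} := by
  induction hΦ : (∑ i, ((c i).1 - m) * (M - (c i).1)).toNat using Nat.strong_induction_on
    generalizing c with
  | _ n ih =>
    by_cases hbdry : ∃ i, (c i).1 = m ∨ (c i).1 = M
    · obtain ⟨i, hi⟩ := hbdry
      exact ⟨c, hc, rfl, i, hc i, hi⟩
    push Not at hbdry
    obtain ⟨c', hc', hsum, hsq⟩ := exists_sum_eq_sum_sq_lt hdown hup hN c hc hbdry
    have hlt := Finset.sum_sub_mul_sub_lt Finset.univ (fun i => (c i).1) (fun i => (c' i).1) m M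
      (by simp only [← Prod.fst_sum, hsum]) hsq
    have hnonneg : 0 ≤ ∑ i, ((c' i).1 - m) * (M - (c' i).1) :=
      Finset.sum_nonneg fun i _ => mul_nonneg (by linarith [hbound _ (hc' i)])
        (by linarith [hbound _ (hc' i)])
    obtain ⟨c'', hc'', hsum', hbdry'⟩ := ih _ (by omega) c' hc' rfl
    exact ⟨c'', hc'', hsum'.trans hsum, hbdry'⟩

theorem foldSum_succ_subset
    (hbound : ∀ a ∈ A, m ≤ a.1 ∧ a.1 ≤ M)
    (hdown : ∀ a ∈ A, a.1 ≠ m → ∃ a' ∈ A, a'.1 < a.1 ∧ a.1 ≤ a'.1 + b)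
    (hup : ∀ a ∈ A, a.1 ≠ M → ∃ a' ∈ A, a.1 < a'.1 ∧ a'.1 ≤ a.1 + b)
    {k : ℕ} (hk : Fintype.card G * b + Fintype.card G * (b * b) ≤ k) :
    foldSum (k + 1) A ⊆ {a ∈ A | a.1 = m ∨ a.1 = M} + foldSum k A := by
  rintro _ ⟨c, hc, rfl⟩
  obtain ⟨c', hc', hsum, i, hi⟩ := exists_sum_eq_of_mem_boundary hbound hdown hup
    (Nat.lt_succ_of_le hk) c hc
  exact ⟨c' i, hi, _, ⟨_, fun j => hc' _, rfl⟩, hsum ▸ (Fin.sum_univ_succAbove c' i).symm⟩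

end Boundary

theorem Finset.card_filter_fst_eq_le {α β : Type*} [DecidableEq α] [Fintype β]
    (A : Finset (α × β)) (x : α) : (A.filter fun p => p.1 = x).card ≤ Fintype.card β :=
  Finset.card_le_card_of_injOn Prod.snd (fun _ _ => Finset.mem_coe.2 (Finset.mem_univ _))
    fun _ hp _ hq hpq =>
      Prod.ext ((Finset.mem_filter.1 hp).2.trans (Finset.mem_filter.1 hq).2.symm) hpq

theorem Finset.exists_lt_le_add_of_ne_min' (P : Finset ℤ) (hP : P.Nonempty) (b : ℤ)
    (hgap : ∀ x ∈ P, x ≠ P.max' hP → ∃ y ∈ P, x < y ∧ y ≤ x + b)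
    {x : ℤ} (hx : x ∈ P) (hxmin : x ≠ P.min' hP) : ∃ y ∈ P, y < x ∧ x ≤ y + b := by
  have hbelow : (P.filter (· < x)).Nonempty :=
    ⟨P.min' hP, Finset.mem_filter.2 ⟨P.min'_mem hP, lt_of_le_of_ne (P.min'_le x hx) hxmin.symm⟩⟩
  set y := (P.filter (· < x)).max' hbelow
  obtain ⟨hyP, hyx⟩ := Finset.mem_filter.1 ((P.filter (· < x)).max'_mem hbelow)
  obtain ⟨z, hzP, hyz, hzy⟩ := hgap y hyP (ne_of_lt (hyx.trans_le (P.le_max' x hx)))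
  have hxz : x ≤ z := not_lt.1 fun hzx =>
    (((P.filter (· < x)).le_max' z (Finset.mem_filter.2 ⟨hzP, hzx⟩)).trans_lt hyz).false
  exact ⟨y, hyP, hyx, hxz.trans hzy⟩

theorem stmt_2 (G₀ : Type*) [AddCommGroup G₀] [Fintype G₀] (e : ℕ)
    (he : e = Fintype.card G₀)
    (A : Finset (ℤ × G₀)) (hA : A.Nonempty) (b : ℕ)
    (P : Finset ℤ) (hP : P = A.image Prod.fst)
    -- consecutive gaps of the projection are bounded by `b`
    (hgap : ∀ x ∈ P, x ≠ P.max' (hP ▸ hA.image _) →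
      ∃ y ∈ P, x < y ∧ y ≤ x + (b : ℤ))
    (A₀ : Finset (ℤ × G₀))
    (hA₀ : A₀ = A.filter (fun p =>
      p.1 = P.min' (hP ▸ hA.image _) ∨ p.1 = P.max' (hP ▸ hA.image _))) :
    A₀.card ≤ 2 * e ∧
    ∀ n : ℕ, 2 * b ^ 2 * e < n →
      foldSum n (A : Set (ℤ × G₀)) =
        foldSum (n - 2 * b ^ 2 * e) (A₀ : Set (ℤ × G₀)) +
          foldSum (2 * b ^ 2 * e) (A : Set (ℤ × G₀)) := by
  classical
  subst he hP hA₀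
  set P := A.image Prod.fst
  have hPne : P.Nonempty := hA.image _
  have hmemP : ∀ a ∈ A, a.1 ∈ P := fun a ha => Finset.mem_image_of_mem _ ha
  refine ⟨?_, fun n hn => ?_⟩
  · rw [Finset.filter_or]
    exact (Finset.card_union_le _ _).trans (by
      linarith [A.card_filter_fst_eq_le (P.min' hPne), A.card_filter_fst_eq_le (P.max' hPne)])
  have hsucc := foldSum_succ_subset (A := (A : Set (ℤ × G₀)))
    (fun a ha => ⟨P.min'_le _ (hmemP a ha), P.le_max' _ (hmemP a ha)⟩)
    (fun a ha hne => Finset.exists_mem_image.1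
      (P.exists_lt_le_add_of_ne_min' hPne b hgap (hmemP a ha) hne))
    (fun a ha hne => Finset.exists_mem_image.1 (hgap _ (hmemP a ha) hne))
    (k := 2 * b ^ 2 * Fintype.card G₀) (by nlinarith [Nat.le_mul_self b])
  rw [foldSum_eq_nsmul, foldSum_eq_nsmul] at hsucc
  have hstable := Set.nsmul_add_eq_of_succ_nsmul_subset (Set.sep_subset _ _) hsucc
    (n - 2 * b ^ 2 * Fintype.card G₀)
  rw [Nat.sub_add_cancel hn.le] at hstable
  simp only [foldSum_eq_nsmul, Finset.coe_filter]
  exact hstable
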